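/- arXiv:2502.03969 — 2 statements merged into one kernel-verified Lean document; each statement's English description precedes it below -/
import Mathlib

section
/- In the confounding model $X = \Gamma^T H + E$ with $\mathbb{E}[HH^T] = I_q$, $\mathbb{E}[HE^T] = 0$, $\mathbb{E}[H] = 0$, $\mathbb{E}[E] = 0$, $\mathrm{Cov}(E) = \Sigma_E$ positive definite, and $b = \mathbb{E}[XX^T]^{-1}\mathbb{E}[XH^T]\delta$ for $\delta \in \mathbb{R}^q$, one has $\mathbb{E}[(H^T\delta - X^T b)^2] \leq \|\delta\|_2^2 \, \lambda_{\max}(\Sigma_E) \, \lambda_{\min}(\Gamma)^{-2}$, where $\lambda_{\min}(\Gamma)$ is the smallest singular value of the $q \times p$ matrix $\Gamma$ (assumed positive). -/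
/-!
Writing `u = δ - Γ b`, the residual is `Hᵀu - Eᵀb`, so its second moment is the ridge objective
`f(x) = ‖δ - Γ x‖² + xᵀ Σ_E x` evaluated at `x = b`. The normal equations `(ΓᵀΓ + Σ_E) b = Γᵀδ`
say that `b` minimises `f`, so `f(b) ≤ f(c)` for the minimum-norm solution `c = Γᵀ(ΓΓᵀ)⁻¹δ` of
`Γ c = δ`. Then `f(c) = cᵀ Σ_E c ≤ λ_max(Σ_E) ‖c‖²`, and `‖c‖² ≤ ‖δ‖² / λ_min(Γ)²`.
-/

open Matrix MeasureTheory

lemma Matrix.dotProduct_self_eq_sum_sq {n : Type*} [Fintype n] (x : n → ℝ) :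
    x ⬝ᵥ x = ∑ i, x i ^ 2 := by
  simp only [dotProduct, sq]

section SecondMoments

variable {Ω ι κ : Type*} [MeasurableSpace Ω] {μ : Measure Ω} [Fintype ι] [Fintype κ]

lemma memLp_dotProduct {F : Ω → ι → ℝ} (hF : ∀ i, MemLp (fun ω => F ω i) 2 μ) (a : ι → ℝ) :
    MemLp (fun ω => a ⬝ᵥ F ω) 2 μ :=
  memLp_finsetSum _ fun i _ => (hF i).const_mul (a i)

lemma integral_dotProduct_mul_dotProduct {F : Ω → ι → ℝ} {G : Ω → κ → ℝ}
    (hF : ∀ i, MemLp (fun ω => F ω i) 2 μ) (hG : ∀ j, MemLp (fun ω => G ω j) 2 μ)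
    (a : ι → ℝ) (c : κ → ℝ) :
    ∫ ω, (a ⬝ᵥ F ω) * (c ⬝ᵥ G ω) ∂μ
      = a ⬝ᵥ (Matrix.of fun i j => ∫ ω, F ω i * G ω j ∂μ) *ᵥ c := by
  have hint : ∀ i j, Integrable (fun ω => a i * c j * (F ω i * G ω j)) μ :=
    fun i j => ((hF i).integrable_mul (hG j)).const_mul _
  have hexpand : ∀ ω, (a ⬝ᵥ F ω) * (c ⬝ᵥ G ω) = ∑ i, ∑ j, a i * c j * (F ω i * G ω j) := by
    intro ω
    simp only [dotProduct, Finset.sum_mul_sum]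
    exact Finset.sum_congr rfl fun i _ => Finset.sum_congr rfl fun j _ => by ring
  simp_rw [hexpand]
  rw [integral_finsetSum _ fun i _ => integrable_finsetSum _ fun j _ => hint i j]
  simp_rw [integral_finsetSum _ fun j _ => hint _ j, integral_const_mul]
  simp only [dotProduct, mulVec, of_apply, Finset.mul_sum]
  exact Finset.sum_congr rfl fun i _ => Finset.sum_congr rfl fun j _ => by ring

lemma integral_dotProduct_sub_dotProduct_sq [DecidableEq ι] {H : Ω → ι → ℝ} {E : Ω → κ → ℝ}
    (hH : ∀ i, MemLp (fun ω => H ω i) 2 μ) (hE : ∀ j, MemLp (fun ω => E ω j) 2 μ)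
    (hHH : ∀ i j, ∫ ω, H ω i * H ω j ∂μ = (1 : Matrix ι ι ℝ) i j)
    (hHE : ∀ i j, ∫ ω, H ω i * E ω j ∂μ = 0)
    {S : Matrix κ κ ℝ} (hEE : ∀ i j, ∫ ω, E ω i * E ω j ∂μ = S i j) (u : ι → ℝ) (v : κ → ℝ) :
    ∫ ω, (u ⬝ᵥ H ω - v ⬝ᵥ E ω) ^ 2 ∂μ = u ⬝ᵥ u + v ⬝ᵥ S *ᵥ v := by
  have hexpand : ∀ ω, (u ⬝ᵥ H ω - v ⬝ᵥ E ω) ^ 2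
      = (u ⬝ᵥ H ω) * (u ⬝ᵥ H ω) - 2 * ((u ⬝ᵥ H ω) * (v ⬝ᵥ E ω))
        + (v ⬝ᵥ E ω) * (v ⬝ᵥ E ω) := fun ω => by ring
  have iHH : Integrable (fun ω => (u ⬝ᵥ H ω) * (u ⬝ᵥ H ω)) μ :=
    (memLp_dotProduct hH u).integrable_mul (memLp_dotProduct hH u)
  have iHE : Integrable (fun ω => (u ⬝ᵥ H ω) * (v ⬝ᵥ E ω)) μ :=
    (memLp_dotProduct hH u).integrable_mul (memLp_dotProduct hE v)
  have iEE : Integrable (fun ω => (v ⬝ᵥ E ω) * (v ⬝ᵥ E ω)) μ :=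
    (memLp_dotProduct hE v).integrable_mul (memLp_dotProduct hE v)
  simp_rw [hexpand]
  rw [integral_add (by exact iHH.sub (iHE.const_mul 2)) iEE, integral_sub iHH (iHE.const_mul 2),
    integral_const_mul, integral_dotProduct_mul_dotProduct hH hH,
    integral_dotProduct_mul_dotProduct hH hE, integral_dotProduct_mul_dotProduct hE hE]
  have hHH' : (Matrix.of fun i j => ∫ ω, H ω i * H ω j ∂μ) = 1 := Matrix.ext hHH
  have hHE' : (Matrix.of fun i j => ∫ ω, H ω i * E ω j ∂μ) = 0 := Matrix.ext hHE
  have hEE' : (Matrix.of fun i j => ∫ ω, E ω i * E ω j ∂μ) = S := Matrix.ext hEE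
  simp [hHH', hHE', hEE']

end SecondMoments

section Ridge

variable {m n : Type*} [Fintype m] [Fintype n]

def ridgeObjective (Γ : Matrix m n ℝ) (S : Matrix n n ℝ) (δ : m → ℝ) (x : n → ℝ) : ℝ :=
  (δ - Γ *ᵥ x) ⬝ᵥ (δ - Γ *ᵥ x) + x ⬝ᵥ S *ᵥ x

lemma ridgeObjective_eq (Γ : Matrix m n ℝ) (S : Matrix n n ℝ) (δ : m → ℝ) (x : n → ℝ) :
    ridgeObjective Γ S δ x = δ ⬝ᵥ δ - 2 * (x ⬝ᵥ Γᵀ *ᵥ δ) + x ⬝ᵥ (Γᵀ * Γ + S) *ᵥ x := by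
  have hcross : Γ *ᵥ x ⬝ᵥ δ = x ⬝ᵥ Γᵀ *ᵥ δ := by
    rw [dotProduct_comm, dotProduct_transpose_mulVec]
  have hgram : x ⬝ᵥ (Γᵀ * Γ) *ᵥ x = Γ *ᵥ x ⬝ᵥ Γ *ᵥ x := by
    rw [← mulVec_mulVec, dotProduct_transpose_mulVec]
  rw [ridgeObjective, add_mulVec, dotProduct_add, hgram, sub_dotProduct, dotProduct_sub,
    dotProduct_sub, dotProduct_comm δ (Γ *ᵥ x), hcross]
  ring

lemma ridgeObjective_le {Γ : Matrix m n ℝ} {S : Matrix n n ℝ} (hS : S.PosSemidef) {δ : m → ℝ}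
    {b : n → ℝ} (hb : (Γᵀ * Γ + S) *ᵥ b = Γᵀ *ᵥ δ) (x : n → ℝ) :
    ridgeObjective Γ S δ b ≤ ridgeObjective Γ S δ x := by
  set M := Γᵀ * Γ + S
  have hM : M.PosSemidef := by
    simpa [M] using (posSemidef_conjTranspose_mul_self Γ).add hS
  have hMsymm : x ⬝ᵥ M *ᵥ b = b ⬝ᵥ M *ᵥ x := by
    rw [← dotProduct_transpose_mulVec, ← conjTranspose_eq_transpose_of_trivial, hM.isHermitian.eq]
  have hgap : 0 ≤ (x - b) ⬝ᵥ M *ᵥ (x - b) := by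
    simpa using hM.dotProduct_mulVec_nonneg (x - b)
  rw [mulVec_sub, sub_dotProduct, dotProduct_sub, dotProduct_sub, ← hMsymm] at hgap
  rw [ridgeObjective_eq, ridgeObjective_eq, ← hb]
  linarith

end Ridge

lemma exists_mulVec_eq_and_sum_sq_le {m n : Type*} [Fintype m] [Fintype n] [DecidableEq m]
    {Γ : Matrix m n ℝ} {σ : ℝ} (hσ : 0 < σ)
    (hΓ : ∀ x : m → ℝ, σ ^ 2 * ∑ i, x i ^ 2 ≤ x ⬝ᵥ (Γ * Γᵀ) *ᵥ x) (δ : m → ℝ) :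
    ∃ c : n → ℝ, Γ *ᵥ c = δ ∧ σ ^ 2 * ∑ i, c i ^ 2 ≤ ∑ i, δ i ^ 2 := by
  set A := Γ * Γᵀ
  have hA : A.PosDef := by
    refine PosDef.of_dotProduct_mulVec_pos ?_ fun x hx => ?_
    · simp [A, IsHermitian, conjTranspose_eq_transpose_of_trivial, transpose_mul]
    · have hx2 : 0 < ∑ i, x i ^ 2 := by
        simpa [dotProduct_self_eq_sum_sq] using dotProduct_self_star_pos_iff.mpr hx
      simpa using (by positivity : 0 < σ ^ 2 * ∑ i, x i ^ 2).trans_le (hΓ x)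
  set w := A⁻¹ *ᵥ δ
  have hAw : A *ᵥ w = δ := by
    rw [mulVec_mulVec, mul_nonsing_inv A hA.det_pos.ne'.isUnit, one_mulVec]
  refine ⟨Γᵀ *ᵥ w, by rw [mulVec_mulVec, hAw], ?_⟩
  have hnorm : ∑ i, (Γᵀ *ᵥ w) i ^ 2 = w ⬝ᵥ δ := by
    rw [← dotProduct_self_eq_sum_sq, ← hAw, ← mulVec_mulVec, dotProduct_transpose_mulVec,
      dotProduct_comm]
  have hw : σ ^ 2 * ∑ i, w i ^ 2 ≤ w ⬝ᵥ δ := hAw ▸ hΓ w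
  have hcs : (w ⬝ᵥ δ) ^ 2 ≤ (∑ i, w i ^ 2) * ∑ i, δ i ^ 2 :=
    Finset.sum_mul_sq_le_sq_mul_sq Finset.univ w δ
  have hW : 0 ≤ ∑ i, w i ^ 2 := Finset.sum_nonneg fun i _ => sq_nonneg (w i)
  have hD : 0 ≤ ∑ i, δ i ^ 2 := Finset.sum_nonneg fun i _ => sq_nonneg (δ i)
  rw [hnorm]
  -- `σ² t² ≤ σ² ‖w‖² ‖δ‖² ≤ t ‖δ‖²` for `t = w ⬝ᵥ δ`, by Cauchy–Schwarz and then `hw`.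
  by_contra! hlt
  have ht : 0 < w ⬝ᵥ δ := pos_of_mul_pos_right (hD.trans_lt hlt) (by positivity)
  nlinarith [mul_pos (sub_pos.2 hlt) ht, mul_le_mul_of_nonneg_left hcs (sq_nonneg σ),
    mul_le_mul_of_nonneg_right hw hD]

lemma nonneg_of_forall_dotProduct_mulVec_le {n : Type*} [Fintype n] [Nonempty n]
    {S : Matrix n n ℝ} (hS : S.PosSemidef) {l : ℝ}
    (hl : ∀ x : n → ℝ, x ⬝ᵥ S *ᵥ x ≤ l * ∑ i, x i ^ 2) : 0 ≤ l := by
  classical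
  obtain ⟨i⟩ := ‹Nonempty n›
  have h := hl (Pi.single i 1)
  simp only [Pi.single_apply, ite_pow, one_pow, zero_pow two_ne_zero, Finset.sum_ite_eq',
    Finset.mem_univ, if_true, mul_one] at h
  simpa using (hS.dotProduct_mulVec_nonneg (Pi.single i 1)).trans h
theorem confounding_bias_bound_general
    {Ω : Type*} [MeasurableSpace Ω] (μ : Measure Ω)
    (p q : ℕ) (hqp : q ≤ p)
    (H : Ω → Fin q → ℝ) (Ev : Ω → Fin p → ℝ)
    (hHm : ∀ i, MemLp (fun ω => H ω i) 2 μ)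
    (hEm : ∀ i, MemLp (fun ω => Ev ω i) 2 μ)
    (hHH : ∀ i j, ∫ ω, H ω i * H ω j ∂μ = (1 : Matrix (Fin q) (Fin q) ℝ) i j)
    (hHE : ∀ i j, ∫ ω, H ω i * Ev ω j ∂μ = 0)
    (SE : Matrix (Fin p) (Fin p) ℝ) (hSE : SE.PosDef)
    (hEE : ∀ i j, ∫ ω, Ev ω i * Ev ω j ∂μ = SE i j)
    (Γ : Matrix (Fin q) (Fin p) ℝ)
    (σmin lmax : ℝ) (hσ : 0 < σmin)
    (hΓ : ∀ x : Fin q → ℝ, σmin ^ 2 * (∑ i, x i ^ 2) ≤ x ⬝ᵥ (Γ * Γᵀ).mulVec x)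
    (hlmax : ∀ x : Fin p → ℝ, x ⬝ᵥ SE.mulVec x ≤ lmax * ∑ i, x i ^ 2)
    (X : Ω → Fin p → ℝ) (hX : X = fun ω => Γᵀ.mulVec (H ω) + Ev ω)
    (δ : Fin q → ℝ) (b : Fin p → ℝ)
    (hb : b = (Γᵀ * Γ + SE)⁻¹.mulVec (Γᵀ.mulVec δ)) :
    ∫ ω, (δ ⬝ᵥ H ω - X ω ⬝ᵥ b) ^ 2 ∂μ ≤ (∑ i, δ i ^ 2) * lmax * (σmin ^ 2)⁻¹ := by
  rcases Nat.eq_zero_or_pos p with rfl | hp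
  · obtain rfl : q = 0 := Nat.le_zero.mp hqp
    simp
  have hresidual : ∀ ω, δ ⬝ᵥ H ω - X ω ⬝ᵥ b = (δ - Γ *ᵥ b) ⬝ᵥ H ω - b ⬝ᵥ Ev ω := fun ω => by
    rw [hX, add_dotProduct, dotProduct_comm _ b, dotProduct_transpose_mulVec, sub_dotProduct,
      dotProduct_comm (Ev ω), dotProduct_comm (H ω)]
    ring
  have hnormal : (Γᵀ * Γ + SE) *ᵥ b = Γᵀ *ᵥ δ := by
    have hM : (Γᵀ * Γ + SE).PosDef := by
      simpa using PosDef.posSemidef_add (posSemidef_conjTranspose_mul_self Γ) hSE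
    rw [hb, mulVec_mulVec, mul_nonsing_inv _ hM.det_pos.ne'.isUnit, one_mulVec]
  obtain ⟨c, hΓc, hc⟩ := exists_mulVec_eq_and_sum_sq_le hσ hΓ δ
  have : Nonempty (Fin p) := Fin.pos_iff_nonempty.mp hp
  have hlmax0 := nonneg_of_forall_dotProduct_mulVec_le hSE.posSemidef hlmax
  calc ∫ ω, (δ ⬝ᵥ H ω - X ω ⬝ᵥ b) ^ 2 ∂μ = ridgeObjective Γ SE δ b := by
        simp_rw [hresidual]
        exact integral_dotProduct_sub_dotProduct_sq hHm hEm hHH hHE hEE _ _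
    _ ≤ ridgeObjective Γ SE δ c := ridgeObjective_le hSE.posSemidef hnormal c
    _ = c ⬝ᵥ SE *ᵥ c := by simp [ridgeObjective, hΓc]
    _ ≤ lmax * ∑ i, c i ^ 2 := hlmax c
    _ ≤ lmax * ((∑ i, δ i ^ 2) * (σmin ^ 2)⁻¹) := by
        gcongr
        rw [le_mul_inv_iff₀ (by positivity)]
        linarith
    _ = (∑ i, δ i ^ 2) * lmax * (σmin ^ 2)⁻¹ := by ring

/-- Bias bound in the confounding model `X = Γᵀ H + E` with `E[H]=0`, `E[E]=0`, `E[HHᵀ]=I_q`,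
`E[HEᵀ]=0`, `Cov(E) = Σ_E` positive definite, and `b = E[XXᵀ]⁻¹ E[XHᵀ] δ = (ΓᵀΓ + Σ_E)⁻¹ Γᵀ δ`:
`E[(Hᵀδ - Xᵀb)²] ≤ ‖δ‖² λ_max(Σ_E) λ_min(Γ)⁻²`, where `σmin = λ_min(Γ) > 0` is the smallest
singular value of `Γ` (Rayleigh characterization `σmin² ‖x‖² ≤ xᵀ Γ Γᵀ x`) and `lmax` the
largest eigenvalue of `Σ_E` (`xᵀ Σ_E x ≤ lmax ‖x‖²`). -/
theorem confounding_bias_bound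
    {Ω : Type*} [MeasurableSpace Ω] (μ : Measure Ω) [IsProbabilityMeasure μ]
    (p q : ℕ) (hqp : q ≤ p)
    (H : Ω → Fin q → ℝ) (Ev : Ω → Fin p → ℝ)
    (hHm : ∀ i, MemLp (fun ω => H ω i) 2 μ)
    (hEm : ∀ i, MemLp (fun ω => Ev ω i) 2 μ)
    (hHmean : ∀ i, ∫ ω, H ω i ∂μ = 0)
    (hEmean : ∀ i, ∫ ω, Ev ω i ∂μ = 0)
    (hHH : ∀ i j, ∫ ω, H ω i * H ω j ∂μ = (1 : Matrix (Fin q) (Fin q) ℝ) i j)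
    (hHE : ∀ i j, ∫ ω, H ω i * Ev ω j ∂μ = 0)
    (SE : Matrix (Fin p) (Fin p) ℝ) (hSE : SE.PosDef)
    (hEE : ∀ i j, ∫ ω, Ev ω i * Ev ω j ∂μ = SE i j)
    (Γ : Matrix (Fin q) (Fin p) ℝ)
    (σmin lmax : ℝ) (hσ : 0 < σmin)
    (hΓ : ∀ x : Fin q → ℝ, σmin ^ 2 * (∑ i, x i ^ 2) ≤ x ⬝ᵥ (Γ * Γᵀ).mulVec x)
    (hlmax : ∀ x : Fin p → ℝ, x ⬝ᵥ SE.mulVec x ≤ lmax * ∑ i, x i ^ 2)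
    (X : Ω → Fin p → ℝ) (hX : X = fun ω => Γᵀ.mulVec (H ω) + Ev ω)
    (δ : Fin q → ℝ) (b : Fin p → ℝ)
    (hb : b = (Γᵀ * Γ + SE)⁻¹.mulVec (Γᵀ.mulVec δ)) :
    ∫ ω, (δ ⬝ᵥ H ω - X ω ⬝ᵥ b) ^ 2 ∂μ ≤ (∑ i, δ i ^ 2) * lmax * (σmin ^ 2)⁻¹ :=
  confounding_bias_bound_general μ p q hqp H Ev hHm hEm hHH hHE SE hSE hEE Γ σmin lmax hσ hΓ hlmax X
    hX δ b hb
end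

section
/- Under the confounding model with $X = \Gamma^T H + E$ and the assumptions above, the projection coefficient $b = (\Gamma^T\Gamma + \Sigma_E)^{-1}\Gamma^T\delta$ satisfies $\|b\|_2^2 \leq \mathrm{cond}(\Sigma_E) \cdot \|\delta\|_2^2 / \lambda_{\min}(\Gamma)^2$, where $\mathrm{cond}(\Sigma_E) = \lambda_{\max}(\Sigma_E)/\lambda_{\min}(\Sigma_E)$. -/
/-!
Let `u = δ - Γ b` be the residual. The normal equations `(ΓᵀΓ + Σ) b = Γᵀ δ` say `Σ b = Γᵀ u`,
hence `bᵀ Σ b = ⟨δ - u, u⟩ ≤ ‖δ‖ ‖u‖ - ‖u‖²`, while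
`σ² ‖u‖² ≤ ‖Γᵀ u‖² = ‖Σ b‖² ≤ λ_max bᵀ Σ b`. Eliminating `u` between the two gives
`σ² bᵀ Σ b ≤ λ_max ‖δ‖²`, and `λ_min ‖b‖² ≤ bᵀ Σ b` finishes.
-/

open Matrix
open scoped MatrixOrder

lemma mul_le_mul_of_le_sub_of_sq_le_mul {c L s t U D : ℝ} (hc : 0 ≤ c) (hL : 0 ≤ L) (hD : 0 ≤ D)
    (hs : s ≤ t - U) (hU : 0 ≤ U) (hcU : c * U ≤ L * s) (hCS : t ^ 2 ≤ D * U) :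
    c * s ≤ L * D := by
  have hsq : (c * t) ^ 2 ≤ L * D * (c * t) :=
    calc (c * t) ^ 2 ≤ c * D * (c * U) := by
          nlinarith [mul_le_mul_of_nonneg_left hCS (mul_nonneg hc hc)]
      _ ≤ c * D * (L * s) := mul_le_mul_of_nonneg_left hcU (mul_nonneg hc hD)
      _ ≤ L * D * (c * t) := by nlinarith [mul_nonneg (mul_nonneg hc hD) hL]
  have hct : c * t ≤ L * D := by nlinarith [mul_nonneg hL hD]
  nlinarith [mul_le_mul_of_nonneg_left (by linarith : s ≤ t) hc]

namespace Matrix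

variable {m n : Type*} [Fintype m] [Fintype n]

lemma sum_sq_eq_dotProduct_self (x : n → ℝ) : ∑ i, x i ^ 2 = x ⬝ᵥ x := by
  simp only [dotProduct, sq]

lemma le_of_forall_mul_sum_sq_le [Nonempty n] {f : (n → ℝ) → ℝ} {a c : ℝ}
    (hlow : ∀ x, a * ∑ i, x i ^ 2 ≤ f x) (hup : ∀ x, f x ≤ c * ∑ i, x i ^ 2) : a ≤ c := by
  have hpos : (0 : ℝ) < ∑ _i : n, (1 : ℝ) ^ 2 := by simp [Fintype.card_pos]
  exact le_of_mul_le_mul_right ((hlow fun _ => 1).trans (hup fun _ => 1)) hpos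

/-- The quadratic-form bound `S ≤ L • 1` upgrades to `S ^ 2 ≤ L • S`, by applying it to `√S x`. -/
lemma PosSemidef.mulVec_dotProduct_mulVec_le [DecidableEq n] {S : Matrix n n ℝ}
    (hS : S.PosSemidef) {L : ℝ} (hL : ∀ x, x ⬝ᵥ S *ᵥ x ≤ L * ∑ i, x i ^ 2) (x : n → ℝ) :
    S *ᵥ x ⬝ᵥ S *ᵥ x ≤ L * (x ⬝ᵥ S *ᵥ x) := by
  set R := CFC.sqrt S
  have hRR : R * R = S := CFC.sqrt_mul_sqrt_self S hS.nonneg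
  have hRt : Rᵀ = R := by simpa using (CFC.sqrt_nonneg S).posSemidef.isHermitian.eq
  have hSR : ∀ y, y ⬝ᵥ S *ᵥ y = R *ᵥ y ⬝ᵥ R *ᵥ y := fun y => by
    rw [← hRR, ← mulVec_mulVec, ← hRt, dotProduct_transpose_mulVec, hRt]
  calc S *ᵥ x ⬝ᵥ S *ᵥ x = R *ᵥ x ⬝ᵥ S *ᵥ (R *ᵥ x) := by rw [hSR, mulVec_mulVec, hRR]
    _ ≤ L * ∑ i, (R *ᵥ x) i ^ 2 := hL _
    _ = L * (x ⬝ᵥ S *ᵥ x) := by rw [sum_sq_eq_dotProduct_self, hSR]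

section NormalEquations

variable {Γ : Matrix m n ℝ} {S : Matrix n n ℝ} {δ : m → ℝ} {b : n → ℝ}

lemma mulVec_eq_transpose_mulVec_residual (hb : (Γᵀ * Γ + S) *ᵥ b = Γᵀ *ᵥ δ) :
    S *ᵥ b = Γᵀ *ᵥ (δ - Γ *ᵥ b) := by
  rw [mulVec_sub, mulVec_mulVec, ← hb, add_mulVec]
  abel

lemma dotProduct_mulVec_eq_residual (hb : (Γᵀ * Γ + S) *ᵥ b = Γᵀ *ᵥ δ) :
    b ⬝ᵥ S *ᵥ b = δ ⬝ᵥ (δ - Γ *ᵥ b) - (δ - Γ *ᵥ b) ⬝ᵥ (δ - Γ *ᵥ b) := by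
  rw [mulVec_eq_transpose_mulVec_residual hb, dotProduct_transpose_mulVec, ← sub_dotProduct,
    sub_sub_cancel, dotProduct_comm]

lemma mul_dotProduct_mulVec_le_of_normal_eq [DecidableEq n] (hS : S.PosSemidef) {L c : ℝ} (hL : 0 ≤ L)
    (hSL : ∀ x, x ⬝ᵥ S *ᵥ x ≤ L * ∑ i, x i ^ 2) (hc : 0 ≤ c)
    (hΓ : ∀ x, c * ∑ i, x i ^ 2 ≤ x ⬝ᵥ (Γ * Γᵀ) *ᵥ x) (hb : (Γᵀ * Γ + S) *ᵥ b = Γᵀ *ᵥ δ) :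
    c * (b ⬝ᵥ S *ᵥ b) ≤ L * ∑ i, δ i ^ 2 := by
  set u := δ - Γ *ᵥ b
  refine mul_le_mul_of_le_sub_of_sq_le_mul hc hL (Fintype.sum_nonneg fun i => sq_nonneg (δ i))
    (t := δ ⬝ᵥ u) (U := ∑ i, u i ^ 2) ?_ (Fintype.sum_nonneg fun i => sq_nonneg (u i)) ?_
    (Finset.sum_mul_sq_le_sq_mul_sq _ δ u)
  · rw [dotProduct_mulVec_eq_residual hb, sum_sq_eq_dotProduct_self]
  · calc c * ∑ i, u i ^ 2 ≤ u ⬝ᵥ (Γ * Γᵀ) *ᵥ u := hΓ u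
      _ = S *ᵥ b ⬝ᵥ S *ᵥ b := by
        rw [mulVec_eq_transpose_mulVec_residual hb, ← mulVec_mulVec, dotProduct_transpose_mulVec]
      _ ≤ L * (b ⬝ᵥ S *ᵥ b) := hS.mulVec_dotProduct_mulVec_le hSL b

end NormalEquations

end Matrix

/-- Bound on the projection coefficient: with `Σ_E` symmetric positive definite with smallest
eigenvalue `lmin` and largest eigenvalue `lmax`, `Γ : q × p` with smallest singular value
`σmin > 0`, and `b = (ΓᵀΓ + Σ_E)⁻¹ Γᵀ δ`, one has
`‖b‖² ≤ cond(Σ_E) ‖δ‖² / λ_min(Γ)²` where `cond(Σ_E) = lmax / lmin`. -/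
theorem projection_coefficient_bound
    (p q : ℕ) (hqp : q ≤ p)
    (SE : Matrix (Fin p) (Fin p) ℝ) (hSE : SE.PosDef)
    (lmin lmax : ℝ) (hlmin : 0 < lmin)
    (hmin : ∀ x : Fin p → ℝ, lmin * ∑ i, x i ^ 2 ≤ x ⬝ᵥ SE.mulVec x)
    (hmax : ∀ x : Fin p → ℝ, x ⬝ᵥ SE.mulVec x ≤ lmax * ∑ i, x i ^ 2)
    (Γ : Matrix (Fin q) (Fin p) ℝ)
    (σmin : ℝ) (hσ : 0 < σmin)
    (hΓ : ∀ x : Fin q → ℝ, σmin ^ 2 * (∑ i, x i ^ 2) ≤ x ⬝ᵥ (Γ * Γᵀ).mulVec x)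
    (δ : Fin q → ℝ) (b : Fin p → ℝ)
    (hb : b = (Γᵀ * Γ + SE)⁻¹.mulVec (Γᵀ.mulVec δ)) :
    ∑ i, b i ^ 2 ≤ (lmax / lmin) * (∑ i, δ i ^ 2) / σmin ^ 2 := by
  rcases Nat.eq_zero_or_pos p with rfl | hp
  · obtain rfl : q = 0 := Nat.le_zero.mp hqp
    simp
  have : Nonempty (Fin p) := Fin.pos_iff_nonempty.mp hp
  have hlmax : 0 ≤ lmax := hlmin.le.trans (le_of_forall_mul_sum_sq_le hmin hmax)
  have hM : (Γᵀ * Γ + SE).PosDef := by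
    simpa using PosDef.posSemidef_add (posSemidef_conjTranspose_mul_self Γ) hSE
  have hnormal : (Γᵀ * Γ + SE) *ᵥ b = Γᵀ *ᵥ δ := by
    rw [hb, mulVec_mulVec, mul_nonsing_inv _ hM.det_pos.ne'.isUnit, one_mulVec]
  have hquad := mul_dotProduct_mulVec_le_of_normal_eq hSE.posSemidef hlmax hmax (sq_nonneg σmin) hΓ hnormal
  rw [div_mul_eq_mul_div, div_div, le_div_iff₀ (by positivity)]
  nlinarith [mul_le_mul_of_nonneg_left (hmin b) (sq_nonneg σmin)]
end
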